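/- Intermediate bound (46) in the proof of Theorem 3.3 (generalization bound with a fixed synthetic dataset). Let P₀ be a probability measure on Z with P₀(Zᵢ) > 0 for every i ∈ {1,…,K}. Fix n ≥ 1 and δ > 0. Then with probability at least 1 − δ over S = (s₁,…,s_n) ~ P₀^⊗n, the following holds simultaneously for every nonempty finite tuple G = (u₁,…,u_g) of points of Z: if every entry of G lies in ⋃_{i ∈ T_S} Zᵢ and gᵢ := |Gᵢ| > 0 for every i ∈ T_S, then F(P₀) ≤ L · Σ_{i ∈ T_S} (nᵢ/n) · R(Sᵢ, Zᵢ | P₀) + C·√((2K·ln 2 − 2·ln δ)/n) + F(S) − Σ_{i ∈ T_S} (gᵢ/g) · F(Sᵢ) + L · Σ_{i ∈ T_S} (gᵢ/g) · d̄(Gᵢ, Sᵢ) + F(G), where nᵢ = |Sᵢ| and Gᵢ is the subtuple of G lying in Zᵢ. -/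

import Mathlib

/-!
Only the concentration of `F(S)` is random: by Hoeffding's inequality for the `n` independent
losses with values in `[0, C]`, `F(P₀) ≤ F(S) + C ε` fails with probability at most
`exp (-2 n ε²) ≤ δ`. The rest is deterministic. The robustness term is nonnegative. On a region
`Zᵢ` with `i ∈ T_S`, averaging `ℓ s ≤ ℓ u + L ‖h s - h u‖` over `Gᵢ × Sᵢ` gives
`F(Sᵢ) ≤ F(Gᵢ) + L d̄(Gᵢ, Sᵢ)`; weighting by `gᵢ / g` and summing over `T_S`, whose regions
partition the entries of `G`, turns `∑ (gᵢ / g) F(Gᵢ)` into `F(G)`.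
-/

open MeasureTheory ProbabilityTheory

open Classical in
/-- The set of indices of the entries of the tuple `S` that lie in the region `A`. -/
noncomputable def idxIn {Z : Type*} {m : ℕ} (S : Fin m → Z) (A : Set Z) : Finset (Fin m) :=
  Finset.univ.filter fun j => S j ∈ A

open Classical in
/-- `T_S`: the set of indices `i` of regions `Zpart i` containing at least one entry of `S`. -/
noncomputable def TS {Z : Type*} {K m : ℕ} (Zpart : Fin K → Set Z) (S : Fin m → Z) :
    Finset (Fin K) :=
  Finset.univ.filter fun i => (idxIn S (Zpart i)).Nonempty

/-- Empirical loss of `ℓ` on the subtuple of `S` indexed by `B`. -/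
noncomputable def empLoss {Z : Type*} {m : ℕ} (ℓ : Z → ℝ) (S : Fin m → Z)
    (B : Finset (Fin m)) : ℝ :=
  (B.card : ℝ)⁻¹ * ∑ j ∈ B, ℓ (S j)

/-- Local robustness `R(s, A | P) = E_{z∼P}[‖h z − h s‖ | z ∈ A]`. -/
noncomputable def locRob {Z : Type*} [MeasurableSpace Z] {H : Type*} [NormedAddCommGroup H]
    (h : Z → H) (P : Measure Z) (A : Set Z) (s : Z) : ℝ :=
  ∫ z, ‖h z - h s‖ ∂(P[|A])

/-- Local robustness of the subtuple of `S` indexed by `B`: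
`R(S_B, A | P) = (1/|B|) ∑_{j∈B} R(S j, A | P)`. -/
noncomputable def tupRob {Z : Type*} [MeasurableSpace Z] {H : Type*} [NormedAddCommGroup H]
    (h : Z → H) (P : Measure Z) (A : Set Z) {m : ℕ} (S : Fin m → Z) (B : Finset (Fin m)) : ℝ :=
  (B.card : ℝ)⁻¹ * ∑ j ∈ B, locRob h P A (S j)

/-- `h`-based discrepancy `d̄(G_{BG}, S_{BS})` between the subtuple of `G` indexed by `BG`
and the subtuple of `S` indexed by `BS`. -/
noncomputable def disc {Z : Type*} {H : Type*} [NormedAddCommGroup H] (h : Z → H)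
    {k m : ℕ} (G : Fin k → Z) (BG : Finset (Fin k)) (S : Fin m → Z) (BS : Finset (Fin m)) : ℝ :=
  ((BG.card : ℝ) * (BS.card : ℝ))⁻¹ * ∑ u ∈ BG, ∑ s ∈ BS, ‖h (S s) - h (G u)‖

open Finset Real

lemma measureReal_sum_integral_sub_ge_le {Ω : Type*} [MeasurableSpace Ω] (P : Measure Ω)
    [IsProbabilityMeasure P] {f : Ω → ℝ} (hf : Measurable f) {C : ℝ}
    (hf0 : ∀ z, 0 ≤ f z) (hfC : ∀ z, f z ≤ C) (n : ℕ) {t : ℝ} (ht : 0 ≤ t) :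
    (Measure.pi fun _ : Fin n => P).real {S | t ≤ ∑ j, (∫ z, f z ∂P - f (S j))}
      ≤ exp (-2 * t ^ 2 / (n * C ^ 2)) := by
  have hsubG : HasSubgaussianMGF (fun z => ∫ x, f x ∂P - f z) ((‖C - 0‖₊ / 2) ^ 2) P := by
    convert (hasSubgaussianMGF_of_mem_Icc hf.aemeasurable
      (ae_of_all P fun z => Set.mem_Icc.2 ⟨hf0 z, hfC z⟩)).neg using 1
    ext z; simp
  have hindep := iIndepFun_pi (μ := fun _ : Fin n => P)
    (X := fun _ z => ∫ x, f x ∂P - f z) fun _ => by fun_prop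
  have hoeffding := HasSubgaussianMGF.measure_sum_ge_le_of_iIndepFun hindep (s := univ)
    (fun j _ => .of_map (X := fun z => ∫ x, f x ∂P - f z) (Y := fun S : Fin n → Ω => S j)
      (measurable_pi_apply j).aemeasurable
      (by rwa [(measurePreserving_eval (fun _ : Fin n => P) j).map_eq])) ht
  convert hoeffding using 2
  simp [div_pow, sq_abs]
  ring

lemma measure_empLoss_add_lt_integral_le {Ω : Type*} [MeasurableSpace Ω] (P : Measure Ω)
    [IsProbabilityMeasure P] {f : Ω → ℝ} (hf : Measurable f) {C : ℝ}
    (hf0 : ∀ z, 0 ≤ f z) (hfC : ∀ z, f z ≤ C) {n : ℕ} (hn : 0 < n) {ε : ℝ} (hε : 0 ≤ ε) :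
    Measure.pi (fun _ : Fin n => P) {S | empLoss f S univ + C * ε < ∫ z, f z ∂P}
      ≤ ENNReal.ofReal (exp (-2 * n * ε ^ 2)) := by
  obtain rfl | hC := eq_or_ne C 0
  · have hf_zero : f = 0 := funext fun z => le_antisymm (hfC z) (hf0 z)
    simp [hf_zero, empLoss]
  have hC0 : 0 ≤ C := by
    obtain ⟨z⟩ := nonempty_of_isProbabilityMeasure P
    exact (hf0 z).trans (hfC z)
  have hn' : (n : ℝ) ≠ 0 := by positivity
  calc _ ≤ Measure.pi (fun _ : Fin n => P) {S | n * C * ε ≤ ∑ j, (∫ z, f z ∂P - f (S j))} := by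
        refine measure_mono fun S hS => ?_
        simp only [Set.mem_ofPred_eq, empLoss, card_univ, Fintype.card_fin, sum_sub_distrib,
          sum_const, nsmul_eq_mul] at hS ⊢
        field_simp at hS
        linarith
    _ = ENNReal.ofReal ((Measure.pi fun _ : Fin n => P).real
          {S | n * C * ε ≤ ∑ j, (∫ z, f z ∂P - f (S j))}) := (ofReal_measureReal).symm
    _ ≤ ENNReal.ofReal (exp (-2 * (n * C * ε) ^ 2 / (n * C ^ 2))) :=
        ENNReal.ofReal_le_ofReal (measureReal_sum_integral_sub_ge_le P hf hf0 hfC n (by positivity))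
    _ = ENNReal.ofReal (exp (-2 * n * ε ^ 2)) := by
        congr 2
        field_simp

lemma one_sub_le_measure_of_measure_compl_le {α : Type*} [MeasurableSpace α] {μ : Measure α}
    [IsProbabilityMeasure μ] {s : Set α} {a : ENNReal} (h : μ sᶜ ≤ a) : 1 - a ≤ μ s :=
  calc 1 - a ≤ 1 - μ sᶜ := tsub_le_tsub_left h 1
    _ ≤ μ s := tsub_le_iff_right.2 (measure_univ (μ := μ) ▸ measure_univ_le_add_compl s)

lemma exp_neg_two_mul_sqrt_sq_le (K : ℕ) {n : ℕ} (hn : 0 < n) {δ : ℝ} (hδ0 : 0 < δ)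
    (hδ1 : δ ≤ 1) :
    exp (-2 * n * sqrt ((2 * K * log 2 - 2 * log δ) / n) ^ 2) ≤ δ := by
  have hlogδ : log δ ≤ 0 := log_nonpos hδ0.le hδ1
  have hlog2 : 0 ≤ (K : ℝ) * log 2 := by positivity
  have hn' : (n : ℝ) ≠ 0 := by positivity
  rw [sq_sqrt (div_nonneg (by linarith) n.cast_nonneg), ← exp_log hδ0, exp_le_exp, exp_log hδ0]
  field_simp
  linarith

section Deterministic

variable {Z : Type*} {H : Type*} [NormedAddCommGroup H] {h : Z → H} {ℓ : Z → ℝ} {L : ℝ}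

lemma mem_idxIn {m : ℕ} {S : Fin m → Z} {A : Set Z} {j : Fin m} : j ∈ idxIn S A ↔ S j ∈ A := by
  classical
  simp [idxIn]

lemma idxIn_nonempty_of_mem_TS {K m : ℕ} {Zpart : Fin K → Set Z} {S : Fin m → Z} {i : Fin K}
    (hi : i ∈ TS Zpart S) : (idxIn S (Zpart i)).Nonempty := by
  classical
  simpa [TS] using hi

lemma empLoss_le_empLoss_add_disc (hLip : ∀ s u, |ℓ s - ℓ u| ≤ L * ‖h s - h u‖) {k m : ℕ}
    (G : Fin k → Z) {BG : Finset (Fin k)} (S : Fin m → Z) {BS : Finset (Fin m)}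
    (hBG : BG.Nonempty) (hBS : BS.Nonempty) :
    empLoss ℓ S BS ≤ empLoss ℓ G BG + L * disc h G BG S BS := by
  have hpair : ∑ u ∈ BG, ∑ s ∈ BS, ℓ (S s)
      ≤ ∑ u ∈ BG, ∑ s ∈ BS, (ℓ (G u) + L * ‖h (S s) - h (G u)‖) :=
    sum_le_sum fun u _ => sum_le_sum fun s _ => by
      linarith [le_abs_self (ℓ (S s) - ℓ (G u)), hLip (S s) (G u)]
  simp only [sum_add_distrib, sum_const, nsmul_eq_mul, ← mul_sum] at hpair
  have hBG' : (0 : ℝ) < BG.card := by exact_mod_cast hBG.card_pos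
  have hBS' : (0 : ℝ) < BS.card := by exact_mod_cast hBS.card_pos
  rw [empLoss, empLoss, disc]
  field_simp
  linarith

lemma sum_sum_idxIn_eq_sum {β : Type*} [AddCommMonoid β] {K k : ℕ} {Zpart : Fin K → Set Z}
    (hZdisj : Pairwise (Function.onFun Disjoint Zpart)) {T : Finset (Fin K)} {G : Fin k → Z}
    (hG : ∀ j, G j ∈ ⋃ i ∈ T, Zpart i) (f : Fin k → β) :
    ∑ i ∈ T, ∑ j ∈ idxIn G (Zpart i), f j = ∑ j, f j := by
  classical
  rw [← sum_biUnion fun i _ i' _ hii' => disjoint_left.2 fun j hj hj' =>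
    Set.disjoint_left.1 (hZdisj hii') (mem_idxIn.1 hj) (mem_idxIn.1 hj')]
  congr
  refine eq_univ_of_forall fun j => ?_
  obtain ⟨i, hi, hj⟩ := Set.mem_iUnion₂.1 (hG j)
  exact mem_biUnion.2 ⟨i, hi, mem_idxIn.2 hj⟩

lemma card_div_mul_empLoss {k : ℕ} (G : Fin k → Z) (B : Finset (Fin k)) (g : ℝ) :
    (B.card : ℝ) / g * empLoss ℓ G B = g⁻¹ * ∑ j ∈ B, ℓ (G j) := by
  obtain rfl | hB := B.eq_empty_or_nonempty
  · simp
  have hB' : (B.card : ℝ) ≠ 0 := by exact_mod_cast hB.card_pos.ne'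
  rw [empLoss]
  field_simp

lemma sum_card_div_mul_empLoss_idxIn {K k : ℕ} {Zpart : Fin K → Set Z}
    (hZdisj : Pairwise (Function.onFun Disjoint Zpart)) {T : Finset (Fin K)} {G : Fin k → Z}
    (hG : ∀ j, G j ∈ ⋃ i ∈ T, Zpart i) :
    ∑ i ∈ T, ((idxIn G (Zpart i)).card : ℝ) / k * empLoss ℓ G (idxIn G (Zpart i))
      = empLoss ℓ G univ := by
  simp only [card_div_mul_empLoss]
  rw [← mul_sum, sum_sum_idxIn_eq_sum hZdisj hG, empLoss, card_univ, Fintype.card_fin]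

lemma sum_card_div_mul_empLoss_le {K k m : ℕ} {Zpart : Fin K → Set Z}
    (hZdisj : Pairwise (Function.onFun Disjoint Zpart))
    (hLip : ∀ s u, |ℓ s - ℓ u| ≤ L * ‖h s - h u‖) {S : Fin m → Z} {G : Fin k → Z}
    (hG : ∀ j, G j ∈ ⋃ i ∈ TS Zpart S, Zpart i)
    (hGpos : ∀ i ∈ TS Zpart S, 0 < (idxIn G (Zpart i)).card) :
    ∑ i ∈ TS Zpart S, ((idxIn G (Zpart i)).card : ℝ) / k * empLoss ℓ S (idxIn S (Zpart i))
      ≤ empLoss ℓ G univ + L * ∑ i ∈ TS Zpart S, ((idxIn G (Zpart i)).card : ℝ) / k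
          * disc h G (idxIn G (Zpart i)) S (idxIn S (Zpart i)) :=
  calc _ ≤ ∑ i ∈ TS Zpart S, ((idxIn G (Zpart i)).card : ℝ) / k
          * (empLoss ℓ G (idxIn G (Zpart i))
            + L * disc h G (idxIn G (Zpart i)) S (idxIn S (Zpart i))) :=
        sum_le_sum fun i hi => mul_le_mul_of_nonneg_left
          (empLoss_le_empLoss_add_disc hLip G S (card_pos.1 (hGpos i hi))
            (idxIn_nonempty_of_mem_TS hi)) (by positivity)
    _ = _ := by
        simp only [mul_add, sum_add_distrib, sum_card_div_mul_empLoss_idxIn hZdisj hG, mul_sum,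
          mul_left_comm L]

lemma mul_locRob_nonneg [MeasurableSpace Z] (hLip : ∀ s u, |ℓ s - ℓ u| ≤ L * ‖h s - h u‖)
    (P : Measure Z) (A : Set Z) (s : Z) : 0 ≤ L * locRob h P A s := by
  obtain hL | hL := le_or_gt 0 L
  · exact mul_nonneg hL (integral_nonneg fun _ => norm_nonneg _)
  -- a negative Lipschitz constant forces `h` to be constant
  have hconst : ∀ z, ‖h z - h s‖ = 0 := fun z => le_antisymm
    (by nlinarith [abs_nonneg (ℓ z - ℓ s), hLip z s, norm_nonneg (h z - h s)]) (norm_nonneg _)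
  simp [locRob, hconst]

lemma mul_tupRob_nonneg [MeasurableSpace Z] (hLip : ∀ s u, |ℓ s - ℓ u| ≤ L * ‖h s - h u‖)
    (P : Measure Z) (A : Set Z) {m : ℕ} (S : Fin m → Z) (B : Finset (Fin m)) :
    0 ≤ L * tupRob h P A S B := by
  rw [tupRob, mul_left_comm, mul_sum]
  exact mul_nonneg (by positivity) (sum_nonneg fun j _ => mul_locRob_nonneg hLip P A (S j))

end Deterministic

theorem generalization_bound_fixed_synthetic_dataset_general {Z : Type*} [MeasurableSpace Z] {H : Type*} [NormedAddCommGroup H]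
    (K : ℕ) (Zpart : Fin K → Set Z)
    (hZdisj : Pairwise (Function.onFun Disjoint Zpart))
    (h : Z → H)
    (ℓ : Z → ℝ) (hℓ : Measurable ℓ) (L C : ℝ)
    (hℓ0 : ∀ z, 0 ≤ ℓ z) (hℓC : ∀ z, ℓ z ≤ C)
    (hLip : ∀ s u, |ℓ s - ℓ u| ≤ L * ‖h s - h u‖)
    (P0 : Measure Z) [IsProbabilityMeasure P0]
    (n : ℕ) (hn : 1 ≤ n) (δ : ℝ) (hδ : 0 < δ) :
    1 - ENNReal.ofReal δ ≤
      Measure.pi (fun _ : Fin n => P0)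
        {S : Fin n → Z |
          ∀ (g : ℕ) (G : Fin g → Z), 1 ≤ g →
            (∀ j, G j ∈ ⋃ i ∈ TS Zpart S, Zpart i) →
            (∀ i ∈ TS Zpart S, 0 < (idxIn G (Zpart i)).card) →
            ∫ z, ℓ z ∂P0 ≤
              L * ∑ i ∈ TS Zpart S,
                  ((idxIn S (Zpart i)).card : ℝ) / (n : ℝ)
                    * tupRob h P0 (Zpart i) S (idxIn S (Zpart i))
              + C * Real.sqrt ((2 * K * Real.log 2 - 2 * Real.log δ) / n)
              + empLoss ℓ S Finset.univ
              - ∑ i ∈ TS Zpart S,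
                  ((idxIn G (Zpart i)).card : ℝ) / (g : ℝ) * empLoss ℓ S (idxIn S (Zpart i))
              + L * ∑ i ∈ TS Zpart S,
                  ((idxIn G (Zpart i)).card : ℝ) / (g : ℝ)
                    * disc h G (idxIn G (Zpart i)) S (idxIn S (Zpart i))
              + empLoss ℓ G Finset.univ} := by
  obtain hδ1 | hδ1 := le_or_gt 1 δ
  · simp [tsub_eq_zero_of_le (ENNReal.one_le_ofReal.2 hδ1)]
  set ε := sqrt ((2 * K * log 2 - 2 * log δ) / n)
  refine (one_sub_le_measure_of_measure_compl_le (s := {S : Fin n → Z |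
    ∫ z, ℓ z ∂P0 ≤ empLoss ℓ S univ + C * ε}) ?_).trans (measure_mono ?_)
  · simp only [Set.compl_ofPred, not_le]
    exact (measure_empLoss_add_lt_integral_le P0 hℓ hℓ0 hℓC hn (sqrt_nonneg _)).trans
      (ENNReal.ofReal_le_ofReal (exp_neg_two_mul_sqrt_sq_le K hn hδ hδ1.le))
  intro S hS g G _ hG hGpos
  have hrob : 0 ≤ L * ∑ i ∈ TS Zpart S, ((idxIn S (Zpart i)).card : ℝ) / n
      * tupRob h P0 (Zpart i) S (idxIn S (Zpart i)) := by
    rw [mul_sum]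
    exact sum_nonneg fun i _ => by
      rw [mul_left_comm]
      exact mul_nonneg (by positivity) (mul_tupRob_nonneg hLip _ _ _ _)
  linarith [sum_card_div_mul_empLoss_le hZdisj hLip hG hGpos, hS.out]

theorem generalization_bound_fixed_synthetic_dataset {Z : Type*} [MeasurableSpace Z] {H : Type*} [NormedAddCommGroup H]
    [NormedSpace ℝ H] [MeasurableSpace H] [BorelSpace H]
    (K : ℕ) (hK : 1 ≤ K) (Zpart : Fin K → Set Z)
    (hZmeas : ∀ i, MeasurableSet (Zpart i))
    (hZne : ∀ i, (Zpart i).Nonempty)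
    (hZdisj : Pairwise (Function.onFun Disjoint Zpart))
    (hZcover : ⋃ i, Zpart i = Set.univ)
    (h : Z → H) (hh : Measurable h)
    (ℓ : Z → ℝ) (hℓ : Measurable ℓ) (L C : ℝ)
    (hℓ0 : ∀ z, 0 ≤ ℓ z) (hℓC : ∀ z, ℓ z ≤ C)
    (hLip : ∀ s u, |ℓ s - ℓ u| ≤ L * ‖h s - h u‖)
    (P0 : Measure Z) [IsProbabilityMeasure P0] (hP0 : ∀ i, 0 < P0 (Zpart i))
    (n : ℕ) (hn : 1 ≤ n) (δ : ℝ) (hδ : 0 < δ) :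
    1 - ENNReal.ofReal δ ≤
      Measure.pi (fun _ : Fin n => P0)
        {S : Fin n → Z |
          ∀ (g : ℕ) (G : Fin g → Z), 1 ≤ g →
            (∀ j, G j ∈ ⋃ i ∈ TS Zpart S, Zpart i) →
            (∀ i ∈ TS Zpart S, 0 < (idxIn G (Zpart i)).card) →
            ∫ z, ℓ z ∂P0 ≤
              L * ∑ i ∈ TS Zpart S,
                  ((idxIn S (Zpart i)).card : ℝ) / (n : ℝ)
                    * tupRob h P0 (Zpart i) S (idxIn S (Zpart i))
              + C * Real.sqrt ((2 * K * Real.log 2 - 2 * Real.log δ) / n)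
              + empLoss ℓ S Finset.univ
              - ∑ i ∈ TS Zpart S,
                  ((idxIn G (Zpart i)).card : ℝ) / (g : ℝ) * empLoss ℓ S (idxIn S (Zpart i))
              + L * ∑ i ∈ TS Zpart S,
                  ((idxIn G (Zpart i)).card : ℝ) / (g : ℝ)
                    * disc h G (idxIn G (Zpart i)) S (idxIn S (Zpart i))
              + empLoss ℓ G Finset.univ} :=
  generalization_bound_fixed_synthetic_dataset_general K Zpart hZdisj h ℓ hℓ L C hℓ0 hℓC hLip P0 n
    hn δ hδ
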